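/- Let x ∈ gl(V) with minimal polynomial p^{m_1}, p monic irreducible, such that x is neither cyclic nor semisimple (i.e., the number r of elementary divisors satisfies r > 1 and m_1 > 1). Then C_{gl(V)}(x) has a non-central abelian ideal; in particular it is not reductive. -/

import Mathlib

open Polynomial

variable (F : Type*) [Field F]

attribute [local instance 100] LieRing.ofAssociativeRing

/-- The centralizer of an element of an associative algebra, as a Lie subalgebra. -/
def lieCentralizer {A : Type*} [Ring A] [Algebra F A] (a : A) : LieSubalgebra F A where
  carrier := {y | y * a = a * y}
  add_mem' := by
    intro X Y hX hY
    simp only [Set.mem_setOf_eq] at *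
    rw [add_mul, mul_add, hX, hY]
  zero_mem' := by simp
  smul_mem' := by
    intro c X hX
    simp only [Set.mem_setOf_eq] at *
    rw [smul_mul_assoc, mul_smul_comm, hX]
  lie_mem' := by
    intro X Y hX hY
    simp only [Set.mem_setOf_eq] at *
    show ⁅X, Y⁆ * a = a * ⁅X, Y⁆
    rw [Ring.lie_def]
    calc (X * Y - Y * X) * a = X * (Y * a) - Y * (X * a) := by noncomm_ring
      _ = X * (a * Y) - Y * (a * X) := by rw [hY, hX]
      _ = (X * a) * Y - (Y * a) * X := by noncomm_ring
      _ = (a * X) * Y - (a * Y) * X := by rw [hX, hY]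
      _ = a * (X * Y - Y * X) := by noncomm_ring

/-- A Lie algebra is reductive if every solvable ideal is contained in its center. -/
def IsReductiveLie (R L : Type*) [CommRing R] [LieRing L] [LieAlgebra R L] : Prop :=
  ∀ I : LieIdeal R L, LieAlgebra.IsSolvable I → I ≤ LieAlgebra.center R L

/-!
Regard `V` as an `F[X]`-module through `x`, so that the centralizer of `x` is `End_{F[X]} V`.
A vector `z` of maximal order `p ^ m` spans a direct summand: a submodule `U` maximal among
those meeting `F[X] ∙ z` trivially is a complement. Since `ker p(x)` has dimension
`r * deg p > deg p` while `F[X] ∙ z` meets it in dimension at most `deg p`, the complement `U`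
contains some `w ≠ 0` with `p(x) w = 0`. The endomorphism `g : a • z + u ↦ a • w` lies in `J`
(this needs `m ≥ 2`), and the projection `h` onto `F[X] ∙ z` along `U` satisfies
`h (g z) = 0 ≠ w = g (h z)`.
-/

open Module Submodule

section Complement

variable {R M : Type*} [CommRing R] [AddCommGroup M] [Module R M] {p : R} {n : ℕ} {z v : M}
  {U : Submodule R M}

theorem Submodule.exists_smul_add_of_isCompl (hzU : IsCompl (R ∙ z) U) (y : M) :
    ∃ a : R, ∃ u ∈ U, y = a • z + u := by
  obtain ⟨_, hc, u, hu, rfl⟩ := mem_sup.mp (hzU.sup_eq_top ▸ mem_top (x := y))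
  obtain ⟨a, rfl⟩ := mem_span_singleton.mp hc
  exact ⟨a, u, hu, rfl⟩

theorem Submodule.exists_linearMap_smul_add_eq (hzU : IsCompl (R ∙ z) U) {w : M}
    (hw : ∀ a : R, a • z = 0 → a • w = 0) :
    ∃ g : Module.End R M, ∀ a : R, ∀ u ∈ U, g (a • z + u) = a • w := by
  have hker : Ideal.torsionOf R M z ≤ LinearMap.ker (LinearMap.toSpanSingleton R M w) := hw
  let φ : (R ∙ z) →ₗ[R] M := (Ideal.torsionOf R M z).liftQ _ hker ∘ₗ
    (Ideal.quotTorsionOfEquivSpanSingleton R M z).symm.toLinearMap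
  have hφ : ∀ a : R, φ (a • ⟨z, mem_span_singleton_self z⟩) = a • w := by
    intro a
    rw [← Ideal.quotTorsionOfEquivSpanSingleton_apply_mk, LinearMap.comp_apply,
      LinearEquiv.coe_coe, LinearEquiv.symm_apply_apply, liftQ_apply,
      LinearMap.toSpanSingleton_apply]
  refine ⟨LinearMap.ofIsCompl hzU φ 0, fun a u hu => ?_⟩
  rw [map_add, ← hφ a, ← LinearMap.ofIsCompl_apply_left hzU (a • ⟨z, _⟩),
    ← coe_mk u hu, LinearMap.ofIsCompl_apply_right, LinearMap.zero_apply, add_zero]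
  rfl

theorem Submodule.exists_mem_ne_zero_smul_eq_zero_of_isCompl {A : Submodule R M}
    (hAU : IsCompl A U) (h : ¬ torsionBy R M p ≤ A) : ∃ w ∈ U, w ≠ 0 ∧ p • w = 0 := by
  obtain ⟨y, hy, hyA⟩ := SetLike.not_le_iff_exists.mp h
  obtain ⟨c, hc, w, hw, rfl⟩ := mem_sup.mp (hAU.sup_eq_top ▸ mem_top (x := y))
  refine ⟨w, hw, fun hw0 => hyA (by simpa [hw0] using hc), ?_⟩
  have hsum : p • c + p • w = 0 := by rw [← smul_add]; exact (mem_torsionBy_iff _ _).mp hy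
  refine disjoint_def.mp hAU.1.symm _ (smul_mem _ p hw) ?_
  rw [eq_neg_of_add_eq_zero_right hsum]
  exact neg_mem (smul_mem _ p hc)

variable [IsPrincipalIdealRing R]

theorem Submodule.disjoint_span_singleton_sup_span_singleton (hp : Irreducible p)
    (hM : IsTorsionBy R M (p ^ n)) (hU : Disjoint (R ∙ z) U)
    (hvU : p • v ∈ U) (hv : v ∉ (R ∙ z) ⊔ U) : Disjoint (R ∙ z) (U ⊔ R ∙ v) := by
  rw [disjoint_def]
  intro y hyz hy
  obtain ⟨u, hu, _, hc, rfl⟩ := mem_sup.mp hy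
  obtain ⟨c, rfl⟩ := mem_span_singleton.mp hc
  rcases dvd_or_isCoprime p c hp with ⟨c, rfl⟩ | hpc
  · have hcv : (p * c) • v ∈ U := by rw [mul_comm, mul_smul]; exact U.smul_mem c hvU
    exact disjoint_def.mp hU _ hyz (U.add_mem hu hcv)
  · -- `c` is invertible modulo `p ^ n`, so `v` would lie in `R ∙ z ⊔ U`
    obtain ⟨α, β, hαβ⟩ := hpc.pow_left (m := n)
    refine absurd ?_ hv
    have hcv : c • v ∈ (R ∙ z) ⊔ U := by
      rw [← add_sub_cancel_left u (c • v)]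
      exact sub_mem (mem_sup_left hyz) (mem_sup_right hu)
    rw [← one_smul R v, ← hαβ, add_smul, mul_smul, hM, smul_zero, zero_add, mul_smul]
    exact smul_mem _ β hcv

variable [IsDomain R]

theorem Submodule.mem_span_singleton_sup_of_smul_mem (hp : Irreducible p)
    (hM : IsTorsionBy R M (p ^ n)) (hz : ∀ a : R, a • z = 0 → p ^ n ∣ a)
    (hU : Maximal (Disjoint (R ∙ z)) U) (hv : p • v ∈ (R ∙ z) ⊔ U) : v ∈ (R ∙ z) ⊔ U := by
  by_contra hvN
  obtain ⟨_, ha, u, hu, hpv⟩ := mem_sup.mp hv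
  obtain ⟨a, rfl⟩ := mem_span_singleton.mp ha
  obtain ⟨b, rfl⟩ : p ∣ a := by
    cases n with
    | zero => exact (hvN (by rw [show v = 0 by simpa using @hM v]; exact zero_mem _)).elim
    | succ n =>
      have hsum : p ^ n • a • z + p ^ n • u = 0 := by
        rw [← smul_add, hpv, smul_smul, ← pow_succ, hM]
      have h0 : (p ^ n * a) • z = 0 := by
        rw [mul_smul]
        refine disjoint_def.mp hU.1 _ (smul_mem _ _ (mem_span_singleton.mpr ⟨a, rfl⟩)) ?_
        rw [eq_neg_of_add_eq_zero_left hsum]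
        exact neg_mem (smul_mem _ _ hu)
      rw [← mul_dvd_mul_iff_left (pow_ne_zero n hp.ne_zero), ← pow_succ]
      exact hz _ h0
  have hpv' : p • (v - b • z) = u := by
    rw [smul_sub, ← hpv, smul_smul]
    abel
  have hv'N : v - b • z ∉ (R ∙ z) ⊔ U := fun h =>
    hvN (by simpa using add_mem h (mem_sup_left (smul_mem _ b (mem_span_singleton_self z))))
  have hv'U : v - b • z ∈ U :=
    hU.2 (disjoint_span_singleton_sup_span_singleton hp hM hU.1 (hpv' ▸ hu) hv'N) le_sup_left
      (mem_sup_right (mem_span_singleton_self _))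
  exact hv'N (mem_sup_right hv'U)

theorem Submodule.exists_isCompl_span_singleton (hp : Irreducible p)
    (hM : IsTorsionBy R M (p ^ n)) (hz : ∀ a : R, a • z = 0 → p ^ n ∣ a) :
    ∃ U : Submodule R M, IsCompl (R ∙ z) U := by
  obtain ⟨U, hU⟩ := zorn_le₀ {U : Submodule R M | Disjoint (R ∙ z) U} fun c hc hchain =>
    ⟨sSup c, hchain.directedOn.disjoint_sSup_right.mpr fun _ hb => hc hb, fun _ => le_sSup⟩
  have hdescend : ∀ k : ℕ, ∀ v : M, p ^ k • v ∈ (R ∙ z) ⊔ U → v ∈ (R ∙ z) ⊔ U := by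
    intro k
    induction k with
    | zero => simp
    | succ k ih =>
      intro v hv
      exact mem_span_singleton_sup_of_smul_mem hp hM hz hU
        (ih _ (by rwa [smul_smul, ← pow_succ]))
  exact ⟨U, hU.1, codisjoint_iff.mpr <| eq_top_iff.mpr fun v _ =>
    hdescend n v (by rw [hM]; exact zero_mem _)⟩

theorem Module.exists_not_commute_of_isTorsionBy (hp : Irreducible p) (hn : 1 < n)
    (hM : IsTorsionBy R M (p ^ n)) (hz : ∀ a : R, a • z = 0 → p ^ n ∣ a)
    (hpz : ¬ torsionBy R M p ≤ R ∙ z) :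
    ∃ g h : Module.End R M, (∀ v, p • v = 0 → g v = 0) ∧ (∀ v, p • g v = 0) ∧ ¬ Commute h g := by
  obtain ⟨U, hzU⟩ := exists_isCompl_span_singleton hp hM hz
  obtain ⟨w, hwU, hw0, hpw⟩ := exists_mem_ne_zero_smul_eq_zero_of_isCompl hzU hpz
  have hp_dvd : ∀ a : R, p ^ n ∣ a → p ∣ a := fun a => (dvd_pow_self p (by omega : n ≠ 0)).trans
  obtain ⟨g, hg⟩ := exists_linearMap_smul_add_eq hzU (w := w) fun a ha => by
    obtain ⟨b, rfl⟩ := hp_dvd a (hz a ha)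
    rw [mul_comm, mul_smul, hpw, smul_zero]
  refine ⟨g, (R ∙ z).projection U hzU, fun v hv => ?_, fun v => ?_, fun hcomm => hw0 ?_⟩
  · obtain ⟨a, u, hu, rfl⟩ := exists_smul_add_of_isCompl hzU v
    have hpa : (p * a) • z = 0 := by
      refine disjoint_def.mp hzU.1 _ (mem_span_singleton.mpr ⟨_, rfl⟩) ?_
      rw [mul_smul, eq_neg_of_add_eq_zero_left ((smul_add p (a • z) u).symm.trans hv)]
      exact neg_mem (smul_mem _ p hu)
    obtain ⟨b, rfl⟩ : p ∣ a := by
      have hsq : p ^ 2 ∣ p * a := (pow_dvd_pow p hn).trans (hz _ hpa)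
      rw [sq] at hsq
      exact (mul_dvd_mul_iff_left hp.ne_zero).mp hsq
    rw [hg _ _ hu, mul_comm, mul_smul, hpw, smul_zero]
  · obtain ⟨a, u, hu, rfl⟩ := exists_smul_add_of_isCompl hzU v
    rw [hg _ _ hu, smul_comm, hpw, smul_zero]
  · have hgz : g z = w := by simpa using hg 1 0 U.zero_mem
    have h1 := LinearMap.congr_fun hcomm z
    rwa [Module.End.mul_apply, Module.End.mul_apply, hgz, projection_apply_of_mem_right _ hwU,
      projection_apply_of_mem_left _ (mem_span_singleton_self z), hgz, eq_comm] at h1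

end Complement

section Dimension

theorem Submodule.torsionBy_inf_span_singleton_le {R M : Type*} [CommRing R] [IsDomain R]
    [AddCommGroup M] [Module R M] {p : R} (hp : p ≠ 0) {n : ℕ} {z : M}
    (hz : ∀ a : R, a • z = 0 → p ^ (n + 1) ∣ a) :
    torsionBy R M p ⊓ (R ∙ z) ≤ R ∙ (p ^ n • z) := by
  rintro _ ⟨hy, hyz⟩
  obtain ⟨a, rfl⟩ := mem_span_singleton.mp hyz
  have hpa : p ^ n * p ∣ a * p := by
    rw [← pow_succ, mul_comm]
    exact hz _ (by rw [mul_smul]; exact (mem_torsionBy_iff _ _).mp hy)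
  obtain ⟨b, rfl⟩ := (mul_dvd_mul_iff_right hp).mp hpa
  exact mem_span_singleton.mpr ⟨b, by rw [mul_comm, mul_smul]⟩

variable {K M : Type*} [Field K] [AddCommGroup M] [Module K[X] M] [Module K M]
  [IsScalarTower K K[X] M] {p : K[X]}

theorem Submodule.finrank_span_singleton_le_natDegree (hp : p ≠ 0) {y : M} (hy : p • y = 0) :
    finrank K (K[X] ∙ y) ≤ p.natDegree := by
  have hker : Ideal.span {p} ≤ LinearMap.ker (LinearMap.toSpanSingleton K[X] M y) := by
    rw [Ideal.span, span_le, Set.singleton_subset_iff]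
    exact hy
  have : Module.Finite K (K[X] ⧸ Ideal.span {p}) := (AdjoinRoot.powerBasis hp).finite
  have hrange := LinearMap.finrank_range_le (((Ideal.span {p}).liftQ _ hker).restrictScalars K)
  rwa [LinearMap.range_restrictScalars, range_liftQ, ← LinearMap.span_singleton_eq_range,
    finrank_quotient_span_eq_natDegree] at hrange

theorem Submodule.finrank_torsionBy_inf_span_singleton_le_natDegree [Module.Finite K M]
    (hp : p ≠ 0) {n : ℕ} {z : M} (hz : ∀ a : K[X], a • z = 0 → p ^ (n + 1) ∣ a)
    (hpz : p ^ (n + 1) • z = 0) :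
    finrank K ↥(torsionBy K[X] M p ⊓ (K[X] ∙ z)) ≤ p.natDegree :=
  calc finrank K ↥(torsionBy K[X] M p ⊓ (K[X] ∙ z))
      ≤ finrank K (K[X] ∙ (p ^ n • z)) :=
        Submodule.finrank_mono (restrictScalars_mono K (torsionBy_inf_span_singleton_le hp hz))
    _ ≤ p.natDegree :=
        finrank_span_singleton_le_natDegree hp (by rwa [smul_smul, ← pow_succ'])

end Dimension

section Centralizer

variable {F} {V : Type*} [AddCommGroup V] [Module F V]

theorem commute_aeval_of_mem_lieCentralizer {x y : Module.End F V} (hy : y ∈ lieCentralizer F x)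
    (q : F[X]) : Commute y (aeval x q) :=
  Algebra.commute_of_mem_adjoin_singleton_of_commute (aeval_mem_adjoin_singleton F x) hy

variable (F) in
def kerAevalIdeal (x : Module.End F V) (q : F[X]) : LieIdeal F (lieCentralizer F x) where
  carrier := {g | (∀ v, aeval x q v = 0 → (g : Module.End F V) v = 0) ∧
    ∀ v, aeval x q ((g : Module.End F V) v) = 0}
  add_mem' {a b} ha hb :=
    ⟨fun v hv => by simp [ha.1 v hv, hb.1 v hv], fun v => by simp [ha.2, hb.2]⟩
  zero_mem' := ⟨fun _ _ => rfl, fun _ => by simp⟩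
  smul_mem' c a ha := ⟨fun v hv => by simp [ha.1 v hv], fun v => by simp [ha.2]⟩
  lie_mem {y a} ha := by
    have hq := fun v => LinearMap.congr_fun (commute_aeval_of_mem_lieCentralizer y.2 q).eq v
    simp only [Module.End.mul_apply] at hq
    refine ⟨fun v hv => ?_, fun v => ?_⟩
    · simp [LieSubalgebra.coe_bracket, Ring.lie_def, ha.1 v hv, ha.1 _ (by rw [← hq, hv, map_zero])]
    · simp [LieSubalgebra.coe_bracket, Ring.lie_def, ← hq, ha.2]

theorem lie_eq_zero_of_mem_kerAevalIdeal {x : Module.End F V} {q : F[X]}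
    (a b : lieCentralizer F x) (ha : a ∈ kerAevalIdeal F x q) (hb : b ∈ kerAevalIdeal F x q) :
    ⁅a, b⁆ = 0 := by
  ext v
  simp [LieSubalgebra.coe_bracket, Ring.lie_def, ha.1 _ (hb.2 v), hb.1 _ (ha.2 v)]

instance (x : Module.End F V) (q : F[X]) : IsLieAbelian (kerAevalIdeal F x q) :=
  ⟨fun a b => Subtype.ext (lie_eq_zero_of_mem_kerAevalIdeal a.1 b.1 a.2 b.2)⟩

theorem Module.AEval'.of_mem_torsionBy_iff (x : Module.End F V) {q : F[X]} {v : V} :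
    AEval'.of x v ∈ torsionBy F[X] (AEval' x) q ↔ aeval x q v = 0 := by
  rw [mem_torsionBy_iff, ← AEval.of_aeval_smul, LinearEquiv.map_eq_zero_iff]
  rfl

theorem Module.AEval'.finrank_torsionBy (x : Module.End F V) (q : F[X]) :
    finrank F (torsionBy F[X] (AEval' x) q) = finrank F (LinearMap.ker (aeval x q)) := by
  have hmap : (LinearMap.ker (aeval x q)).map (AEval'.of x : V →ₗ[F] AEval' x) =
      (torsionBy F[X] (AEval' x) q).restrictScalars F := by
    ext w
    rw [mem_map_equiv, restrictScalars_mem, ← (AEval'.of x).apply_symm_apply w,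
      of_mem_torsionBy_iff, LinearEquiv.symm_apply_apply, LinearMap.mem_ker]
  rw [← LinearEquiv.finrank_map_eq (AEval'.of x), hmap]
  rfl

theorem Module.AEval'.conj_restrictScalars_mem_lieCentralizer (x : Module.End F V)
    (f : Module.End F[X] (AEval' x)) :
    (AEval'.of x).symm.conj (f.restrictScalars F) ∈ lieCentralizer F x := by
  show _ * x = x * _
  ext v
  simp [LinearEquiv.conj_apply, ← AEval'.X_smul_of]

theorem exists_mem_kerAevalIdeal_lie_ne_zero [FiniteDimensional F V] {x : Module.End F V}
    {p : F[X]} (hp : Irreducible p) {m : ℕ} (hm : 1 < m) (hmin : minpoly F x = p ^ m)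
    (hdim : p.natDegree < finrank F (LinearMap.ker (aeval x p))) :
    ∃ g ∈ kerAevalIdeal F x p, ∃ h : lieCentralizer F x, ⁅h, g⁆ ≠ 0 := by
  obtain ⟨n, rfl⟩ : ∃ n, m = n + 1 := ⟨m - 1, by omega⟩
  have hann : annihilator F[X] (AEval' x) = Ideal.span {p ^ (n + 1)} := by
    rw [← span_minpoly_eq_annihilator, hmin]
  have hM : IsTorsionBy F[X] (AEval' x) (p ^ (n + 1)) := fun v =>
    mem_annihilator.mp (hann ▸ Ideal.mem_span_singleton_self _) v
  obtain ⟨z, hz⟩ := exists_ker_toSpanSingleton_eq_annihilator F[X] (AEval' x)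
  have hz' : ∀ a : F[X], a • z = 0 → p ^ (n + 1) ∣ a := fun a ha => by
    rw [← Ideal.mem_span_singleton, ← hann, ← hz]
    exact ha
  have hpz : ¬ torsionBy F[X] (AEval' x) p ≤ F[X] ∙ z := fun hle => by
    have hcyc := finrank_torsionBy_inf_span_singleton_le_natDegree hp.ne_zero hz' (@hM z)
    rw [inf_eq_left.mpr hle, AEval'.finrank_torsionBy] at hcyc
    omega
  obtain ⟨g, h, hg_ker, hg_range, hgh⟩ := exists_not_commute_of_isTorsionBy hp hm hM hz' hpz
  refine ⟨⟨_, AEval'.conj_restrictScalars_mem_lieCentralizer x g⟩, ⟨fun v hv => ?_, fun v => ?_⟩,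
    ⟨_, AEval'.conj_restrictScalars_mem_lieCentralizer x h⟩, fun h0 => hgh ?_⟩
  · simp [LinearEquiv.conj_apply, hg_ker _ ((AEval'.of_mem_torsionBy_iff x).mpr hv)]
  · have hv := (AEval'.of_mem_torsionBy_iff x (v := (AEval'.of x).symm (g (AEval'.of x v)))).mp
      (by rw [LinearEquiv.apply_symm_apply]; exact hg_range _)
    simpa [LinearEquiv.conj_apply] using hv
  · have hcomm := congr_arg Subtype.val h0
    rw [LieSubalgebra.coe_bracket, Ring.lie_def, ZeroMemClass.coe_zero, sub_eq_zero] at hcomm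
    ext u
    simpa [LinearEquiv.conj_apply] using LinearMap.congr_fun hcomm ((AEval'.of x).symm u)

end Centralizer

theorem stmt10 {V : Type*} [AddCommGroup V] [Module F V] [FiniteDimensional F V]
    (x : Module.End F V) (p : F[X]) (m r : ℕ)
    (hirr : Irreducible p) (hmin : minpoly F x = p ^ m)
    (hr : Module.finrank F (LinearMap.ker (Polynomial.aeval x p)) = r * p.natDegree)
    (hr1 : 1 < r) (hm1 : 1 < m) :
    (∃ J : LieIdeal F (lieCentralizer F x),
        (∀ a b : lieCentralizer F x, a ∈ J → b ∈ J → ⁅a, b⁆ = 0) ∧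
          ¬ J ≤ LieAlgebra.center F (lieCentralizer F x)) ∧
      ¬ IsReductiveLie F (lieCentralizer F x) := by
  have hdim : p.natDegree < Module.finrank F (LinearMap.ker (aeval x p)) := by
    rw [hr]
    exact lt_mul_left hirr.natDegree_pos hr1
  obtain ⟨g, hg, h, hgh⟩ := exists_mem_kerAevalIdeal_lie_ne_zero hirr hm1 hmin hdim
  have hJ : ¬ kerAevalIdeal F x p ≤ LieAlgebra.center F (lieCentralizer F x) := fun hle =>
    hgh ((LieModule.mem_maxTrivSubmodule _ _ _ _).mp (hle hg) h)
  exact ⟨⟨_, lie_eq_zero_of_mem_kerAevalIdeal, hJ⟩, fun hred => hJ (hred _ inferInstance)⟩
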